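/- Let E be a real inner product space and let l_1, ..., l_T : E → ℝ be differentiable with each l_t being μ-strongly convex for μ > 0 and L-smooth (gradient L-Lipschitz), and suppose each l_t attains its global minimum at a point w*_t. Suppose the iterates satisfy the follow-the-leader (FTL) updates: for each t, w_t is a global minimizer (with vanishing gradient) of F_t(w) := Σ_{i=1}^{t-1} l_i(w), and w_{T+1} is a global minimizer of F_{T+1}. If all iterates w_1, ..., w_T, all minimizers w*_1, ..., w*_T, and the comparator w* lie in a set W of diameter D, then (using ‖∇l_t(w_t)‖ = ‖∇l_t(w_t) − ∇l_t(w*_t)‖ ≤ L‖w_t − w*_t‖ ≤ LD) the regret satisfies R(T) = Σ_{t=1}^{T} [l_t(w_t) − l_t(w*)] ≤ (L²D²/(2μ))·(1 + log T). -/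

import Mathlib

/-!
The regret against any comparator is at most `∑ₜ (Fₜ₊₁(wₜ) - Fₜ₊₁(wₜ₊₁))` ("be the leader"):
this sum telescopes to `∑ₜ lₜ(wₜ) - F_{T+1}(w_{T+1})`, and `w_{T+1}` minimises `F_{T+1}`.
Since `∇Fₜ(wₜ) = 0`, the function `Fₜ₊₁ = Fₜ + lₜ` has gradient `∇lₜ(wₜ)` at `wₜ`, of norm at
most `L‖wₜ - w*ₜ‖ ≤ LD`, and it is `tμ`-strongly convex; the strong-convexity bound
`f x - f y ≤ ‖∇f x‖² / (2m)` therefore bounds the `t`-th gap by `(LD)² / (2tμ)`, and the harmonic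
sum does the rest.
-/
open Finset
open scoped Gradient RealInnerProductSpace

lemma HasGradientAt.add {𝕜 F : Type*} [RCLike 𝕜] [NormedAddCommGroup F] [InnerProductSpace 𝕜 F]
    [CompleteSpace F] {f g : F → 𝕜} {f' g' x : F} (hf : HasGradientAt f f' x)
    (hg : HasGradientAt g g' x) : HasGradientAt (f + g) (f' + g') x := by
  rw [hasGradientAt_iff_hasFDerivAt, map_add]
  exact HasFDerivAt.add hf hg

section ConvexCalculus

variable {E : Type*} [NormedAddCommGroup E]

lemma ConvexOn.add_le_of_hasFDerivAt [NormedSpace ℝ E] {S : Set E} {f : E → ℝ} {f' : E →L[ℝ] ℝ}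
    {x y : E} (hf : ConvexOn ℝ S f) (hx : x ∈ S) (hy : y ∈ S) (hf' : HasFDerivAt f f' x) :
    f x + f' (y - x) ≤ f y := by
  let γ : ℝ →ᵃ[ℝ] E := AffineMap.lineMap x y
  have hγ : HasDerivAt γ (y - x) 0 := by
    simpa [γ] using AffineMap.hasDerivAt_lineMap (a := x) (b := y) (x := (0 : ℝ))
  have hderiv : HasDerivAt (f ∘ γ) (f' (y - x)) 0 := by
    refine HasFDerivAt.comp_hasDerivAt (0 : ℝ) ?_ hγ
    simpa [γ] using hf'
  have hslope := (hf.comp_affineMap γ).le_slope_of_hasDerivAt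
    (by simpa [γ] using hx) (by simpa [γ] using hy) one_pos hderiv
  simp only [slope_def_field, Function.comp_apply, γ, AffineMap.lineMap_apply_zero,
    AffineMap.lineMap_apply_one, sub_zero, div_one] at hslope
  linarith

variable [InnerProductSpace ℝ E]

lemma StrongConvexOn.fun_sum {ι : Type*} {u : Finset ι} {S : Set E} {m : ℝ} {f : ι → E → ℝ}
    (hS : Convex ℝ S) (hf : ∀ i ∈ u, StrongConvexOn S m (f i)) :
    StrongConvexOn S (#u * m) fun x => ∑ i ∈ u, f i x := by
  classical
  induction u using Finset.induction_on with
  | empty => simpa using convexOn_const (0 : ℝ) hS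
  | insert a u ha ih =>
    have hsum := UniformConvexOn.add (hf a (mem_insert_self a u))
      (ih fun i hi => hf i (mem_insert_of_mem hi))
    rw [card_insert_of_notMem ha]
    simp only [sum_insert ha]
    unfold StrongConvexOn
    convert hsum using 1
    · funext r
      simp only [Pi.add_apply]
      push_cast
      ring
    · rfl

variable [CompleteSpace E]

lemma IsLocalMin.gradient_eq_zero {f : E → ℝ} {x : E} (h : IsLocalMin f x) : ∇ f x = 0 := by
  simp [gradient, h.fderiv_eq_zero]

lemma StrongConvexOn.add_inner_add_le_of_hasGradientAt {S : Set E} {m : ℝ} {f : E → ℝ}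
    {f' x y : E} (hf : StrongConvexOn S m f) (hx : x ∈ S) (hy : y ∈ S)
    (hf' : HasGradientAt f f' x) :
    f x + ⟪f', y - x⟫ + m / 2 * ‖y - x‖ ^ 2 ≤ f y := by
  have hg := ((hasStrictFDerivAt_norm_sq x).hasFDerivAt.const_mul (m / 2))
  have := (strongConvexOn_iff_convex.1 hf).add_le_of_hasFDerivAt hx hy (hf'.hasFDerivAt.sub hg)
  simp only [sub_apply, InnerProductSpace.toDual_apply_apply, smul_apply, coe_innerSL_apply,
    nsmul_eq_mul, Nat.cast_ofNat, smul_eq_mul] at this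
  have hexp : ‖y‖ ^ 2 = ‖x‖ ^ 2 + 2 * ⟪x, y - x⟫ + ‖y - x‖ ^ 2 := by
    rw [← norm_add_sq_real, add_sub_cancel]
  rw [hexp] at this
  linarith

lemma StrongConvexOn.sub_le_of_hasGradientAt {S : Set E} {m : ℝ} {f : E → ℝ} {f' x y : E}
    (hf : StrongConvexOn S m f) (hm : 0 < m) (hx : x ∈ S) (hy : y ∈ S)
    (hf' : HasGradientAt f f' x) : f x - f y ≤ ‖f'‖ ^ 2 / (2 * m) := by
  have hfirst := hf.add_inner_add_le_of_hasGradientAt hx hy hf'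
  have hinner := neg_le_of_abs_le (abs_real_inner_le_norm f' (y - x))
  rw [le_div_iff₀ (by positivity)]
  nlinarith [sq_nonneg (m * ‖y - x‖ - ‖f'‖)]

end ConvexCalculus

lemma sum_Icc_inv_le_one_add_log (n : ℕ) : ∑ i ∈ Icc 1 n, (i : ℝ)⁻¹ ≤ 1 + Real.log n := by
  simpa [harmonic_eq_sum_Icc] using harmonic_le_one_add_log n

section FollowTheLeader

variable {E : Type*}

def cumulativeLoss (l : ℕ → E → ℝ) (t : ℕ) (x : E) : ℝ := ∑ i ∈ Icc 1 (t - 1), l i x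

variable {l : ℕ → E → ℝ}

lemma cumulativeLoss_succ_eq_sum (t : ℕ) (x : E) :
    cumulativeLoss l (t + 1) x = ∑ i ∈ Icc 1 t, l i x := rfl

lemma cumulativeLoss_succ {t : ℕ} (ht : 1 ≤ t) (x : E) :
    cumulativeLoss l (t + 1) x = cumulativeLoss l t x + l t x := by
  obtain ⟨s, rfl⟩ := Nat.exists_eq_add_of_le' ht
  rw [cumulativeLoss_succ_eq_sum, cumulativeLoss_succ_eq_sum, sum_Icc_succ_top (by omega)]

lemma sum_cumulativeLoss_succ_sub (w : ℕ → E) (T : ℕ) :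
    ∑ t ∈ Icc 1 T, (cumulativeLoss l (t + 1) (w t) - cumulativeLoss l (t + 1) (w (t + 1)))
      = ∑ t ∈ Icc 1 T, l t (w t) - cumulativeLoss l (T + 1) (w (T + 1)) := by
  induction T with
  | zero => simp [cumulativeLoss]
  | succ T ih =>
    rw [sum_Icc_succ_top (by omega), sum_Icc_succ_top (by omega), ih,
      cumulativeLoss_succ (t := T + 1) (by omega)]
    ring

lemma regret_le_sum_cumulativeLoss_succ_sub {w : ℕ → E} {T : ℕ}
    (hmin : ∀ x, cumulativeLoss l (T + 1) (w (T + 1)) ≤ cumulativeLoss l (T + 1) x) (u : E) :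
    ∑ t ∈ Icc 1 T, (l t (w t) - l t u)
      ≤ ∑ t ∈ Icc 1 T, (cumulativeLoss l (t + 1) (w t) - cumulativeLoss l (t + 1) (w (t + 1))) := by
  rw [sum_cumulativeLoss_succ_sub, sum_sub_distrib, ← cumulativeLoss_succ_eq_sum]
  linarith [hmin u]

variable [NormedAddCommGroup E] [InnerProductSpace ℝ E] [CompleteSpace E]

lemma cumulativeLoss_succ_sub_le {μ : ℝ} (hμ : 0 < μ) {t : ℕ} (ht : 1 ≤ t)
    (hl : ∀ i ∈ Icc 1 t, Differentiable ℝ (l i))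
    (hsc : ∀ i ∈ Icc 1 t, StrongConvexOn Set.univ μ (l i)) {x : E}
    (hx : ∇ (cumulativeLoss l t) x = 0) (y : E) :
    cumulativeLoss l (t + 1) x - cumulativeLoss l (t + 1) y ≤ ‖∇ (l t) x‖ ^ 2 / (2 * (t * μ)) := by
  have hconv : StrongConvexOn Set.univ (t * μ) (cumulativeLoss l (t + 1)) := by
    have := StrongConvexOn.fun_sum convex_univ hsc
    rwa [Nat.card_Icc, Nat.add_sub_cancel] at this
  have hpast : HasGradientAt (cumulativeLoss l t) 0 x := by
    have hdiff : Differentiable ℝ (cumulativeLoss l t) :=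
      Differentiable.fun_sum fun i hi => hl i (Icc_subset_Icc_right (Nat.sub_le t 1) hi)
    simpa [hx] using (hdiff x).hasGradientAt
  have hgrad : HasGradientAt (cumulativeLoss l (t + 1)) (∇ (l t) x) x := by
    rw [show cumulativeLoss l (t + 1) = cumulativeLoss l t + l t from
      funext (cumulativeLoss_succ ht), ← zero_add (∇ (l t) x)]
    exact hpast.add (hl t (right_mem_Icc.2 ht) x).hasGradientAt
  exact hconv.sub_le_of_hasGradientAt (by positivity) (Set.mem_univ x) (Set.mem_univ y) hgrad

end FollowTheLeader

theorem ftl_regret_smooth_strongly_convex_general {E : Type*} [NormedAddCommGroup E]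
    [InnerProductSpace ℝ E] [CompleteSpace E] (T : ℕ) (μ L : ℝ) (hμ : 0 < μ)
    (l : ℕ → E → ℝ) (w wopt : ℕ → E) (wstar : E) (W : Set E) (D : ℝ)
    (hl : ∀ i ∈ Finset.Icc 1 T, Differentiable ℝ (l i))
    (hsc : ∀ i ∈ Finset.Icc 1 T, ConvexOn ℝ Set.univ (fun x => l i x - μ / 2 * ‖x‖ ^ 2))
    (hsmooth : ∀ i ∈ Finset.Icc 1 T, ∀ x y : E, ‖∇ (l i) x - ∇ (l i) y‖ ≤ L * ‖x - y‖)
    (hopt : ∀ i ∈ Finset.Icc 1 T, ∀ x, l i (wopt i) ≤ l i x)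
    (F : ℕ → E → ℝ)
    (hF : ∀ t x, F t x = ∑ i ∈ Finset.Icc 1 (t - 1), l i x)
    (hmin : ∀ t ∈ Finset.Icc 1 T, (∀ x, F t (w t) ≤ F t x) ∧ ∇ (F t) (w t) = 0)
    (hminT : ∀ x, F (T + 1) (w (T + 1)) ≤ F (T + 1) x)
    (hW : ∀ t ∈ Finset.Icc 1 T, w t ∈ W) (hWopt : ∀ t ∈ Finset.Icc 1 T, wopt t ∈ W)
    (hD : ∀ u ∈ W, ∀ v ∈ W, ‖u - v‖ ≤ D) :
    ∑ t ∈ Finset.Icc 1 T, (l t (w t) - l t wstar)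
      ≤ L ^ 2 * D ^ 2 / (2 * μ) * (1 + Real.log T) := by
  obtain rfl : F = cumulativeLoss l := funext fun t => funext (hF t)
  have hgrad : ∀ t ∈ Icc 1 T, ‖∇ (l t) (w t)‖ ^ 2 ≤ L ^ 2 * D ^ 2 := by
    intro t ht
    have hlip := hsmooth t ht (w t) (wopt t)
    rw [IsLocalMin.gradient_eq_zero (Filter.Eventually.of_forall (hopt t ht)), sub_zero] at hlip
    calc ‖∇ (l t) (w t)‖ ^ 2 ≤ (L * ‖w t - wopt t‖) ^ 2 := by gcongr
      _ = L ^ 2 * ‖w t - wopt t‖ ^ 2 := mul_pow ..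
      _ ≤ L ^ 2 * D ^ 2 := by gcongr; exact hD _ (hW t ht) _ (hWopt t ht)
  have hstep : ∀ t ∈ Icc 1 T, cumulativeLoss l (t + 1) (w t) - cumulativeLoss l (t + 1) (w (t + 1))
      ≤ L ^ 2 * D ^ 2 / (2 * μ) * (t : ℝ)⁻¹ := by
    intro t ht
    have hsub : Icc 1 t ⊆ Icc 1 T := Icc_subset_Icc_right (mem_Icc.1 ht).2
    calc _ ≤ ‖∇ (l t) (w t)‖ ^ 2 / (2 * (t * μ)) :=
          cumulativeLoss_succ_sub_le hμ (mem_Icc.1 ht).1 (fun i hi => hl i (hsub hi))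
            (fun i hi => strongConvexOn_iff_convex.2 (hsc i (hsub hi))) (hmin t ht).2 _
      _ ≤ L ^ 2 * D ^ 2 / (2 * (t * μ)) := by gcongr; exact hgrad t ht
      _ = L ^ 2 * D ^ 2 / (2 * μ) * (t : ℝ)⁻¹ := by field_simp
  calc ∑ t ∈ Icc 1 T, (l t (w t) - l t wstar)
      ≤ ∑ t ∈ Icc 1 T, (cumulativeLoss l (t + 1) (w t) - cumulativeLoss l (t + 1) (w (t + 1))) :=
        regret_le_sum_cumulativeLoss_succ_sub hminT wstar
    _ ≤ ∑ t ∈ Icc 1 T, L ^ 2 * D ^ 2 / (2 * μ) * (t : ℝ)⁻¹ := sum_le_sum hstep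
    _ = L ^ 2 * D ^ 2 / (2 * μ) * ∑ t ∈ Icc 1 T, (t : ℝ)⁻¹ := (mul_sum ..).symm
    _ ≤ L ^ 2 * D ^ 2 / (2 * μ) * (1 + Real.log T) := by
        gcongr
        exact sum_Icc_inv_le_one_add_log T

/-- FTL achieves logarithmic regret for smooth, strongly-convex losses
(Theorem: FTL - Smooth + strongly convex). -/
theorem ftl_regret_smooth_strongly_convex {E : Type*} [NormedAddCommGroup E]
    [InnerProductSpace ℝ E] [CompleteSpace E] (T : ℕ) (μ L : ℝ) (hμ : 0 < μ)
    (l : ℕ → E → ℝ) (w wopt : ℕ → E) (wstar : E) (W : Set E) (D : ℝ)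
    (hl : ∀ i ∈ Finset.Icc 1 T, Differentiable ℝ (l i))
    (hsc : ∀ i ∈ Finset.Icc 1 T, ConvexOn ℝ Set.univ (fun x => l i x - μ / 2 * ‖x‖ ^ 2))
    (hsmooth : ∀ i ∈ Finset.Icc 1 T, ∀ x y : E, ‖∇ (l i) x - ∇ (l i) y‖ ≤ L * ‖x - y‖)
    (hopt : ∀ i ∈ Finset.Icc 1 T, ∀ x, l i (wopt i) ≤ l i x)
    (F : ℕ → E → ℝ)
    (hF : ∀ t x, F t x = ∑ i ∈ Finset.Icc 1 (t - 1), l i x)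
    (hmin : ∀ t ∈ Finset.Icc 1 T, (∀ x, F t (w t) ≤ F t x) ∧ ∇ (F t) (w t) = 0)
    (hminT : ∀ x, F (T + 1) (w (T + 1)) ≤ F (T + 1) x)
    (hW : ∀ t ∈ Finset.Icc 1 T, w t ∈ W) (hWopt : ∀ t ∈ Finset.Icc 1 T, wopt t ∈ W)
    (hWs : wstar ∈ W)
    (hD : ∀ u ∈ W, ∀ v ∈ W, ‖u - v‖ ≤ D) :
    ∑ t ∈ Finset.Icc 1 T, (l t (w t) - l t wstar)
      ≤ L ^ 2 * D ^ 2 / (2 * μ) * (1 + Real.log T) :=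
  ftl_regret_smooth_strongly_convex_general T μ L hμ l w wopt wstar W D hl hsc hsmooth hopt F hF
    hmin hminT hW hWopt hD
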